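/- Let D be a divisor of L, I = I(D) and I_∞ = I_∞(D), and let D_∞ = div_∞(t). Let 𝓑 = (b_0, …, b_{n−1}) be a k[t]-basis of I and 𝓑_∞ = (v_0, …, v_{n−1}) an A_∞-basis of I_∞. Then: (1) both 𝓑 and 𝓑_∞ are bases of L as a K-vector space; (2) if the transition matrix P ∈ k(t)^{n×n} defined by b_i = Σ_j P_{ij} v_j is row reduced, then for every r ∈ ℤ the family { b_i·t^j : 0 ≤ i ≤ n−1, 0 ≤ j ≤ d_i + r } is a basis of the k-vector space 𝓛(D + r·D_∞) = I ∩ t^r·I_∞, where (d_0,…,d_{n−1}) = −rdeg(P) is the negative of the row-degree of P; (3) the integers d_i are uniquely determined, up to permutation, by the subring k[t] of L and the divisor D. -/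

import Mathlib

/-
Coordinates with respect to the `k[t]`-basis `b` of `I` are polynomials, and coordinates with
respect to the `A∞`-basis `v` of `I∞` are rational functions of degree `≤ 0`. Writing
`z = Σ λᵢ bᵢ`, the `v`-coordinates of `z` are the entries of `λ P`, so `z ∈ t^r I∞` iff every entry
of `λ P` has degree `≤ r`; because `P` is row reduced this means `deg λᵢ ≤ dᵢ + r` for every `i`.
Hence `I ∩ t^r I∞` has the `k`-basis `bᵢ tʲ` (`j ≤ dᵢ + r`), its dimension is
`Σᵢ max(0, dᵢ + r + 1)`, and these dimensions for all `r` determine the `dᵢ` up to order.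
-/

open Classical IsDedekindDomain

/-- The subset of `k(t)` corresponding to the localization `k[1/t]_(1/t)`. -/
def infinitePlaceRing (k : Type*) [Field k] : Set (RatFunc k) :=
  {z : RatFunc k | ∃ a b : Polynomial k, b.coeff 0 ≠ 0 ∧
    z * Polynomial.aeval (RatFunc.X : RatFunc k)⁻¹ b = Polynomial.aeval (RatFunc.X : RatFunc k)⁻¹ a}

/-- Degree of a rational function, with `deg 0 = ⊥`. -/
noncomputable def ratDeg {k : Type*} [Field k] (z : RatFunc k) : WithBot ℤ :=
  if z = 0 then ⊥ else (z.intDegree : WithBot ℤ)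

/-- Degree of a row vector: the maximum of the degrees of its entries. -/
noncomputable def rowDeg {k : Type*} [Field k] {n : ℕ} (b : Fin n → RatFunc k) : WithBot ℤ :=
  Finset.univ.sup fun j => ratDeg (b j)

/-- A square matrix over `k(t)` with rows `b₀, …, b_{n-1}` is row reduced if
`deg (Σ λᵢ bᵢ) = maxᵢ deg (λᵢ bᵢ)` for all `λᵢ ∈ k(t)`. -/
def RowReduced {k : Type*} [Field k] {n : ℕ} (M : Matrix (Fin n) (Fin n) (RatFunc k)) : Prop :=
  ∀ c : Fin n → RatFunc k,
    rowDeg (fun j => ∑ i, c i * M i j) = Finset.univ.sup fun i => ratDeg (c i) + rowDeg (M i)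

/-- The data of Hess's reduction: `b` is a `k[t]`-basis of `I`, `v` is an `A∞`-basis of
`I∞`, `P` is the (row reduced) transition matrix from `b` to `v`, and `d = -rdeg P`. -/
def IsReducedBasisPair (k L : Type*) [Field k] [Field L] [Algebra (RatFunc k) L]
    [Algebra (Polynomial k) L]
    (Ainf : Subring (RatFunc k)) [Algebra Ainf L]
    (B : Type*) [CommRing B] [IsDomain B] [IsDedekindDomain B] [Algebra B L] [IsFractionRing B L]
    (Binf : Type*) [CommRing Binf] [IsDomain Binf] [IsDedekindDomain Binf] [Algebra Binf L]
    [IsFractionRing Binf L]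
    (n : ℕ)
    (I : FractionalIdeal (nonZeroDivisors B) L) (Iinf : FractionalIdeal (nonZeroDivisors Binf) L)
    (b v : Fin n → L) (P : Matrix (Fin n) (Fin n) (RatFunc k)) (d : Fin n → ℤ) : Prop :=
  LinearIndependent (Polynomial k) b ∧
  (∀ z : L, z ∈ I ↔ z ∈ Submodule.span (Polynomial k) (Set.range b)) ∧
  LinearIndependent Ainf v ∧
  (∀ z : L, z ∈ Iinf ↔ z ∈ Submodule.span Ainf (Set.range v)) ∧
  (∀ i, b i = ∑ j, P i j • v j) ∧
  RowReduced P ∧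
  (∀ i, rowDeg (P i) = ((-(d i) : ℤ) : WithBot ℤ))


open Polynomial Module
open scoped nonZeroDivisors

theorem WithBot.add_coe_le_coe_iff {x : WithBot ℤ} {a b : ℤ} :
    x + (a : WithBot ℤ) ≤ b ↔ x ≤ ((b - a : ℤ) : WithBot ℤ) := by
  induction x with
  | bot => simp
  | coe x => norm_cast; omega

theorem RatFunc.intDegree_X_pow {k : Type*} [Field k] (m : ℕ) :
    ((RatFunc.X : RatFunc k) ^ m).intDegree = m := by
  rw [← RatFunc.algebraMap_X, ← map_pow, RatFunc.intDegree_polynomial, natDegree_X_pow]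

section RatDeg

variable {k : Type*} [Field k]

theorem ratDeg_zero : ratDeg (0 : RatFunc k) = ⊥ := if_pos rfl

theorem ratDeg_of_ne_zero {z : RatFunc k} (hz : z ≠ 0) : ratDeg z = z.intDegree := if_neg hz

theorem ratDeg_nonpos_iff {z : RatFunc k} : ratDeg z ≤ 0 ↔ z.intDegree ≤ 0 := by
  rcases eq_or_ne z 0 with rfl | hz
  · simp [ratDeg_zero]
  · rw [ratDeg_of_ne_zero hz]
    norm_cast

theorem ratDeg_mul (x y : RatFunc k) : ratDeg (x * y) = ratDeg x + ratDeg y := by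
  rcases eq_or_ne x 0 with rfl | hx
  · simp [ratDeg_zero]
  rcases eq_or_ne y 0 with rfl | hy
  · simp [ratDeg_zero]
  rw [ratDeg_of_ne_zero hx, ratDeg_of_ne_zero hy, ratDeg_of_ne_zero (mul_ne_zero hx hy),
    RatFunc.intDegree_mul hx hy, WithBot.coe_add]

theorem ratDeg_X_zpow (r : ℤ) : ratDeg ((RatFunc.X : RatFunc k) ^ r) = r := by
  rw [ratDeg_of_ne_zero (zpow_ne_zero r RatFunc.X_ne_zero)]
  congr 1
  cases r with
  | ofNat m => exact RatFunc.intDegree_X_pow m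
  | negSucc m =>
    rw [zpow_negSucc, RatFunc.intDegree_inv, RatFunc.intDegree_X_pow, Int.negSucc_eq]
    push_cast
    ring

theorem ratDeg_algebraMap {p : k[X]} (hp : p ≠ 0) :
    ratDeg (algebraMap k[X] (RatFunc k) p) = (p.natDegree : ℤ) := by
  rw [ratDeg_of_ne_zero (RatFunc.algebraMap_ne_zero hp), RatFunc.intDegree_polynomial]

theorem ratDeg_algebraMap_le_iff {p : k[X]} {m : ℤ} :
    ratDeg (algebraMap k[X] (RatFunc k) p) ≤ m ↔ ∀ j ∈ p.support, (j : ℤ) ≤ m := by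
  rcases eq_or_ne p 0 with rfl | hp
  · simp [ratDeg_zero]
  rw [ratDeg_algebraMap hp, WithBot.coe_le_coe]
  exact ⟨fun h j hj => (Nat.cast_le.2 (le_natDegree_of_mem_supp j hj)).trans h,
    fun h => h _ (natDegree_mem_support_of_nonzero hp)⟩

theorem RowReduced.forall_ratDeg_le_iff {n : ℕ} {P : Matrix (Fin n) (Fin n) (RatFunc k)}
    (hP : RowReduced P) {d : Fin n → ℤ} (hd : ∀ i, rowDeg (P i) = ((-d i : ℤ) : WithBot ℤ))
    (c : Fin n → RatFunc k) (r : ℤ) :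
    (∀ j, ratDeg (∑ i, c i * P i j) ≤ r) ↔ ∀ i, ratDeg (c i) ≤ ((d i + r : ℤ) : WithBot ℤ) := by
  calc (∀ j, ratDeg (∑ i, c i * P i j) ≤ r)
      ↔ rowDeg (fun j => ∑ i, c i * P i j) ≤ r := by simp [rowDeg, Finset.sup_le_iff]
    _ ↔ (Finset.univ.sup fun i => ratDeg (c i) + rowDeg (P i)) ≤ r := by rw [hP c]
    _ ↔ ∀ i, ratDeg (c i) ≤ ((d i + r : ℤ) : WithBot ℤ) := by
      simp [Finset.sup_le_iff, hd, WithBot.add_coe_le_coe_iff, add_comm]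

end RatDeg

section InfinitePlace

variable {k : Type*} [Field k]

theorem aeval_inv_X_mul_X_pow {q : k[X]} {N : ℕ} (hq : q.natDegree ≤ N) :
    aeval (RatFunc.X : RatFunc k)⁻¹ q * RatFunc.X ^ N =
      algebraMap k[X] (RatFunc k) (q.reflect N) := by
  let := invertibleOfNonzero (RatFunc.X_ne_zero : (RatFunc.X : RatFunc k) ≠ 0)
  have h := eval₂_reflect_mul_pow (algebraMap k (RatFunc k)) RatFunc.X N (q.reflect N)
    (natDegree_reflect_le.trans (max_le le_rfl hq))
  rwa [reflect_reflect, invOf_eq_inv, ← aeval_def, ← aeval_def,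
    RatFunc.aeval_X_left_eq_algebraMap] at h

theorem mem_infinitePlaceRing_iff {z : RatFunc k} :
    z ∈ infinitePlaceRing k ↔ ratDeg z ≤ 0 := by
  constructor
  · rintro ⟨a, b, hb, hab⟩
    rcases eq_or_ne z 0 with rfl | hz
    · simp [ratDeg_zero]
    set N := max a.natDegree b.natDegree
    have hbN : (b.reflect N).coeff N ≠ 0 := by
      rwa [coeff_reflect, revAt_le le_rfl, Nat.sub_self]
    have hdeg_b : ratDeg (algebraMap k[X] (RatFunc k) (b.reflect N)) = (N : ℤ) := by
      rw [ratDeg_algebraMap (fun h => hbN (by rw [h, coeff_zero]))]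
      exact congrArg _ (congrArg _ (le_antisymm
        (natDegree_reflect_le.trans (max_le le_rfl le_sup_right)) (le_natDegree_of_ne_zero hbN)))
    have hdeg_a : ratDeg (algebraMap k[X] (RatFunc k) (a.reflect N)) ≤ (N : ℤ) :=
      ratDeg_algebraMap_le_iff.2 fun j hj => Nat.cast_le.2 <| (le_natDegree_of_mem_supp j hj).trans
        (natDegree_reflect_le.trans (max_le le_rfl le_sup_left))
    have h := congrArg (ratDeg <| · * (RatFunc.X : RatFunc k) ^ N) hab
    rw [mul_assoc, aeval_inv_X_mul_X_pow (le_max_right _ _),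
      aeval_inv_X_mul_X_pow (le_max_left _ _), ratDeg_mul, hdeg_b] at h
    rw [← h, ratDeg_of_ne_zero hz] at hdeg_a
    rw [ratDeg_of_ne_zero hz]
    norm_cast at hdeg_a ⊢
    omega
  · intro hz
    rcases eq_or_ne z 0 with rfl | hz0
    · exact ⟨0, 1, by simp, by simp⟩
    set N := z.denom.natDegree
    have hnum : z.num.natDegree ≤ N := by
      have h := ratDeg_nonpos_iff.1 hz
      rw [RatFunc.intDegree] at h
      omega
    refine ⟨z.num.reflect N, z.denom.reflect N, ?_, ?_⟩
    · rw [coeff_reflect, revAt_le (Nat.zero_le N), Nat.sub_zero]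
      exact leadingCoeff_ne_zero.2 z.denom_ne_zero
    · refine mul_right_cancel₀ (pow_ne_zero N RatFunc.X_ne_zero) ?_
      rw [mul_assoc, aeval_inv_X_mul_X_pow (natDegree_reflect_le.trans (max_le le_rfl le_rfl)),
        aeval_inv_X_mul_X_pow (natDegree_reflect_le.trans (max_le le_rfl hnum)),
        reflect_reflect, reflect_reflect]
      exact (eq_div_iff (RatFunc.algebraMap_ne_zero z.denom_ne_zero)).1
        (RatFunc.num_div_denom z).symm

theorem isFractionRing_of_forall_mem_iff {A : Subring (RatFunc k)}
    (hA : ∀ z, z ∈ A ↔ ratDeg z ≤ 0) : IsFractionRing A (RatFunc k) := by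
  refine IsFractionRing.of_field A (RatFunc k) fun z => ?_
  rcases le_or_gt z.intDegree 0 with hz | hz
  · exact ⟨⟨z, (hA z).2 (ratDeg_nonpos_iff.2 hz)⟩, 1, by simp; rfl⟩
  · refine ⟨1, ⟨z⁻¹, (hA _).2 (ratDeg_nonpos_iff.2 ?_)⟩, by simp; exact (inv_inv z).symm⟩
    rw [RatFunc.intDegree_inv]
    omega

end InfinitePlace

section PolynomialModule

variable {R M ι : Type*} [CommSemiring R] [AddCommMonoid M] [Module R[X] M] [Module R M]
  [IsScalarTower R R[X] M]

theorem linearIndependent_X_pow_smul {b : ι → M} (hb : LinearIndependent R[X] b) :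
    LinearIndependent R fun p : ℕ × ι => (X ^ p.1 : R[X]) • b p.2 := by
  simpa [coe_basisMonomials, X_pow_eq_monomial] using
    linearIndependent_smul (basisMonomials R).linearIndependent hb

theorem mem_span_X_pow_smul_iff [Fintype ι] (b : ι → M) (m : ι → ℤ) (z : M) :
    z ∈ Submodule.span R (Set.range fun p : {ij : ι × ℕ // (ij.2 : ℤ) ≤ m ij.1} =>
        (X ^ p.1.2 : R[X]) • b p.1.1) ↔
      ∃ c : ι → R[X], (∀ i, ∀ j ∈ (c i).support, (j : ℤ) ≤ m i) ∧ ∑ i, c i • b i = z := by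
  constructor
  · intro hz
    induction hz using Submodule.span_induction with
    | mem x hx =>
      obtain ⟨⟨⟨i, j⟩, hij⟩, rfl⟩ := hx
      refine ⟨Pi.single i (X ^ j), fun i' j' hj' => ?_, by simp [Pi.single_apply]⟩
      rcases eq_or_ne i' i with rfl | hi
      · rw [Pi.single_eq_same] at hj'
        exact (Nat.cast_le.2 <| (le_natDegree_of_mem_supp j' hj').trans
          (natDegree_X_pow_le j)).trans hij
      · simp [hi] at hj'
    | zero => exact ⟨0, by simp, by simp⟩
    | add x y _ _ hx hy =>
      obtain ⟨c, hc, rfl⟩ := hx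
      obtain ⟨c', hc', rfl⟩ := hy
      refine ⟨c + c', fun i j hj => ?_, by simp [add_smul, Finset.sum_add_distrib]⟩
      rcases Finset.mem_union.1 (support_add hj) with h | h
      exacts [hc i j h, hc' i j h]
    | smul a x _ hx =>
      obtain ⟨c, hc, rfl⟩ := hx
      exact ⟨a • c, fun i j hj => hc i j (support_smul _ _ hj),
        by simp [Finset.smul_sum, smul_assoc]⟩
  · rintro ⟨c, hc, rfl⟩
    refine Submodule.sum_mem _ fun i _ => ?_
    rw [(c i).as_sum_support_C_mul_X_pow, Finset.sum_smul]
    refine Submodule.sum_mem _ fun j hj => ?_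
    rw [C_mul', smul_assoc]
    exact Submodule.smul_mem _ _ (Submodule.subset_span ⟨⟨(i, j), hc i j hj⟩, rfl⟩)

end PolynomialModule

section Counting

variable {ι : Type*} [Fintype ι]

theorem natCard_subtype_snd_le (m : ι → ℤ) :
    Nat.card {ij : ι × ℕ // (ij.2 : ℤ) ≤ m ij.1} = ∑ i, (m i + 1).toNat := by
  let e : ∀ i, {j : ℕ // (j : ℤ) ≤ m i} ≃ Fin (m i + 1).toNat := fun i =>
    { toFun := fun j => ⟨j, by have := j.2; omega⟩
      invFun := fun j => ⟨j, by have := j.2; omega⟩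
      left_inv := fun _ => rfl
      right_inv := fun _ => rfl }
  have := fun i => Finite.of_equiv _ (e i).symm
  rw [Nat.card_congr (Equiv.subtypeProdEquivSigmaSubtype fun i (j : ℕ) => (j : ℤ) ≤ m i),
    Nat.card_sigma]
  simp [Nat.card_congr (e _)]

theorem exists_perm_of_card_fiber_eq {γ : Type*} [DecidableEq γ] {f g : ι → γ}
    (h : ∀ c, (Finset.univ.filter (f · = c)).card = (Finset.univ.filter (g · = c)).card) :
    ∃ σ : Equiv.Perm ι, ∀ i, g i = f (σ i) :=
  ⟨Equiv.ofFiberEquiv fun c => Fintype.equivOfCardEq (by simp [Fintype.card_subtype, h c]),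
    fun i => (Equiv.ofFiberEquiv_map _ i).symm⟩

/-- The first difference in `r` counts the `i` with `-r ≤ d i`, the second those with `d i = -r`. -/
theorem exists_perm_of_sum_toNat_eq {d d' : ι → ℤ}
    (h : ∀ r, ∑ i, (d i + r).toNat = ∑ i, (d' i + r).toNat) :
    ∃ σ : Equiv.Perm ι, ∀ i, d' i = d (σ i) := by
  have hsucc (e : ι → ℤ) (r : ℤ) : ∑ i, (e i + (r + 1)).toNat =
      ∑ i, (e i + r).toNat + (Finset.univ.filter (-r ≤ e ·)).card := by
    rw [Finset.card_filter, ← Finset.sum_add_distrib]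
    refine Finset.sum_congr rfl fun i _ => ?_
    split_ifs <;> omega
  have hsplit (e : ι → ℤ) (m : ℤ) : (Finset.univ.filter (m ≤ e ·)).card =
      (Finset.univ.filter (e · = m)).card + (Finset.univ.filter (m + 1 ≤ e ·)).card := by
    rw [Finset.card_filter, Finset.card_filter, Finset.card_filter, ← Finset.sum_add_distrib]
    refine Finset.sum_congr rfl fun i _ => ?_
    split_ifs <;> omega
  have hge (m : ℤ) :
      (Finset.univ.filter (m ≤ d ·)).card = (Finset.univ.filter (m ≤ d' ·)).card := by
    have h1 := hsucc d (-m)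
    have h2 := hsucc d' (-m)
    rw [h (-m + 1), h (-m), neg_neg] at h1
    rw [neg_neg] at h2
    omega
  refine exists_perm_of_card_fiber_eq fun m => ?_
  have h1 := hsplit d m
  have h2 := hsplit d' m
  rw [hge, hge] at h1
  omega

end Counting

theorem finrank_eq_natDegree_of_adjoin_eq_top {K L : Type*} [Field K] [Field L] [Algebra K L]
    {f : K[X]} {x : L} (hirr : Irreducible f) (hmonic : f.Monic) (hx : aeval x f = 0)
    (hgen : Algebra.adjoin K {x} = ⊤) : FiniteDimensional K L ∧ finrank K L = f.natDegree := by
  have hint : IsIntegral K x := ⟨f, hmonic, hx⟩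
  refine ⟨(PowerBasis.ofAdjoinEqTop hint hgen).finite, ?_⟩
  rw [(PowerBasis.ofAdjoinEqTop hint hgen).finrank, PowerBasis.ofAdjoinEqTop_dim,
    ← minpoly.eq_of_irreducible_of_monic hirr hx hmonic]

section FunctionField

variable {k L : Type*} [Field k] [Field L] [Algebra (RatFunc k) L]

theorem mem_spanSingleton_X_zpow_mul_iff {Ainf : Subring (RatFunc k)} [Algebra Ainf L]
    [IsScalarTower Ainf (RatFunc k) L] (hA : ∀ z, z ∈ Ainf ↔ ratDeg z ≤ 0)
    {Binf : Type*} [CommRing Binf] [Algebra Binf L] [IsFractionRing Binf L]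
    {Iinf : FractionalIdeal Binf⁰ L} {ι : Type*} (v : Basis ι (RatFunc k) L)
    (hIinf : ∀ z, z ∈ Iinf ↔ z ∈ Submodule.span Ainf (Set.range v)) (r : ℤ) (z : L) :
    z ∈ FractionalIdeal.spanSingleton Binf⁰ (algebraMap (RatFunc k) L RatFunc.X ^ r) * Iinf ↔
      ∀ j, ratDeg (v.repr z j) ≤ r := by
  set T := algebraMap (RatFunc k) L RatFunc.X ^ r
  have hT : T ≠ 0 := zpow_ne_zero r ((_root_.map_ne_zero _).2 RatFunc.X_ne_zero)
  have hscale : T⁻¹ * z = (RatFunc.X ^ (-r) : RatFunc k) • z := by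
    rw [Algebra.smul_def, map_zpow₀, zpow_neg]
  have hrange (w : RatFunc k) : w ∈ Set.range (algebraMap Ainf (RatFunc k)) ↔ w ∈ Ainf :=
    ⟨by rintro ⟨a, rfl⟩; exact a.2, fun h => ⟨⟨w, h⟩, rfl⟩⟩
  calc _ ↔ T⁻¹ * z ∈ Iinf := by
        rw [FractionalIdeal.mem_singleton_mul]
        exact ⟨by rintro ⟨y, hy, rfl⟩; rwa [inv_mul_cancel_left₀ hT],
          fun h => ⟨_, h, (mul_inv_cancel_left₀ hT z).symm⟩⟩
    _ ↔ ∀ j, RatFunc.X ^ (-r) * v.repr z j ∈ Ainf := by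
        simp only [hIinf, v.mem_span_iff_repr_mem Ainf, hscale, hrange, map_smul,
          Finsupp.smul_apply, smul_eq_mul]
    _ ↔ ∀ j, ratDeg (v.repr z j) ≤ r := by
        simp only [hA, ratDeg_mul, ratDeg_X_zpow, add_comm _ (ratDeg _), ← WithBot.coe_zero,
          WithBot.add_coe_le_coe_iff, zero_sub, neg_neg]

variable [Algebra k[X] L] [IsScalarTower k[X] (RatFunc k) L]

theorem mul_algebraMap_X_pow_eq_smul (x : L) (j : ℕ) :
    x * algebraMap (RatFunc k) L RatFunc.X ^ j = (X ^ j : k[X]) • x := by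
  rw [Algebra.smul_def, IsScalarTower.algebraMap_apply k[X] (RatFunc k) L, map_pow, map_pow,
    RatFunc.algebraMap_X, mul_comm]

variable [Algebra k L] [IsScalarTower k k[X] L] {ι : Type*}

theorem LinearIndependent.mul_algebraMap_X_pow {b : ι → L} (hb : LinearIndependent k[X] b)
    (m : ι → ℤ) :
    LinearIndependent k fun p : {ij : ι × ℕ // (ij.2 : ℤ) ≤ m ij.1} =>
      b p.1.1 * algebraMap (RatFunc k) L RatFunc.X ^ p.1.2 := by
  have hinj : Function.Injective fun p : {ij : ι × ℕ // (ij.2 : ℤ) ≤ m ij.1} => (p.1.2, p.1.1) :=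
    fun p q hpq => Subtype.ext (Prod.ext (congrArg Prod.snd hpq) (congrArg Prod.fst hpq))
  have h := (linearIndependent_X_pow_smul (R := k) hb).comp _ hinj
  simp only [mul_algebraMap_X_pow_eq_smul]
  exact h

theorem LinearIndependent.finrank_span_mul_algebraMap_X_pow [Fintype ι] {b : ι → L}
    (hb : LinearIndependent k[X] b) (m : ι → ℤ) :
    finrank k (Submodule.span k (Set.range fun p : {ij : ι × ℕ // (ij.2 : ℤ) ≤ m ij.1} =>
      b p.1.1 * algebraMap (RatFunc k) L RatFunc.X ^ p.1.2)) = ∑ i, (m i + 1).toNat := by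
  rw [finrank_eq_nat_card_basis (Basis.span (hb.mul_algebraMap_X_pow m)),
    natCard_subtype_snd_le]

end FunctionField

namespace IsReducedBasisPair

variable {k L : Type*} [Field k] [Field L] [Algebra (RatFunc k) L] [Algebra k[X] L]
  {Ainf : Subring (RatFunc k)} [Algebra Ainf L]
  {B : Type*} [CommRing B] [IsDedekindDomain B] [Algebra B L] [IsFractionRing B L]
  {Binf : Type*} [CommRing Binf] [IsDedekindDomain Binf] [Algebra Binf L] [IsFractionRing Binf L]
  {n : ℕ} {I : FractionalIdeal B⁰ L} {Iinf : FractionalIdeal Binf⁰ L}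
  {b v : Fin n → L} {P : Matrix (Fin n) (Fin n) (RatFunc k)} {d : Fin n → ℤ}

theorem linearIndependent_left [IsScalarTower k[X] (RatFunc k) L]
    (h : IsReducedBasisPair k L Ainf B Binf n I Iinf b v P d) :
    LinearIndependent (RatFunc k) b :=
  (LinearIndependent.iff_fractionRing k[X] (RatFunc k)).1 h.1

theorem linearIndependent_right [IsScalarTower Ainf (RatFunc k) L]
    (hA : ∀ z, z ∈ Ainf ↔ ratDeg z ≤ 0) (h : IsReducedBasisPair k L Ainf B Binf n I Iinf b v P d) :
    LinearIndependent (RatFunc k) v :=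
  have := isFractionRing_of_forall_mem_iff hA
  (LinearIndependent.iff_fractionRing Ainf (RatFunc k)).1 h.2.2.1

variable [FiniteDimensional (RatFunc k) L]

theorem span_left_eq_top [IsScalarTower k[X] (RatFunc k) L] (hn : finrank (RatFunc k) L = n)
    (h : IsReducedBasisPair k L Ainf B Binf n I Iinf b v P d) :
    Submodule.span (RatFunc k) (Set.range b) = ⊤ :=
  h.linearIndependent_left.span_eq_top_of_card_eq_finrank' (by simp [hn])

theorem span_right_eq_top [IsScalarTower Ainf (RatFunc k) L] (hA : ∀ z, z ∈ Ainf ↔ ratDeg z ≤ 0)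
    (hn : finrank (RatFunc k) L = n) (h : IsReducedBasisPair k L Ainf B Binf n I Iinf b v P d) :
    Submodule.span (RatFunc k) (Set.range v) = ⊤ :=
  (h.linearIndependent_right hA).span_eq_top_of_card_eq_finrank' (by simp [hn])

variable [IsScalarTower k[X] (RatFunc k) L] [IsScalarTower Ainf (RatFunc k) L]

theorem mem_and_mem_iff_exists_sum (hA : ∀ z, z ∈ Ainf ↔ ratDeg z ≤ 0)
    (hn : finrank (RatFunc k) L = n) (h : IsReducedBasisPair k L Ainf B Binf n I Iinf b v P d)
    (r : ℤ) (z : L) :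
    (z ∈ I ∧ z ∈ FractionalIdeal.spanSingleton Binf⁰
        (algebraMap (RatFunc k) L RatFunc.X ^ r) * Iinf) ↔
      ∃ c : Fin n → k[X],
        (∀ i, ratDeg (algebraMap k[X] (RatFunc k) (c i)) ≤ ((d i + r : ℤ) : WithBot ℤ)) ∧
          ∑ i, c i • b i = z := by
  obtain ⟨vK, hvK⟩ : ∃ vK : Basis (Fin n) (RatFunc k) L, ⇑vK = v :=
    ⟨Basis.mk (h.linearIndependent_right hA) (h.span_right_eq_top hA hn).ge, Basis.coe_mk _ _⟩
  obtain ⟨-, hbI, -, hvI, hbv, hP, hd⟩ := h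
  have hrepr (c : Fin n → k[X]) :
      vK.repr (∑ i, c i • b i) = fun j => ∑ i, algebraMap k[X] (RatFunc k) (c i) * P i j := by
    suffices ∑ i, c i • b i = ∑ j, (∑ i, algebraMap k[X] (RatFunc k) (c i) * P i j) • vK j by
      rw [this, vK.repr_sum_self]
    simp only [hvK, hbv, Finset.smul_sum, Finset.sum_smul, ← algebraMap_smul (RatFunc k) (c _),
      smul_smul]
    exact Finset.sum_comm
  have hmem := mem_spanSingleton_X_zpow_mul_iff hA vK (by simpa [hvK] using hvI) r
  simp only [hbI, Submodule.mem_span_range_iff_exists_fun]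
  constructor
  · rintro ⟨⟨c, rfl⟩, hz⟩
    rw [hmem, hrepr, hP.forall_ratDeg_le_iff hd] at hz
    exact ⟨c, hz, rfl⟩
  · rintro ⟨c, hc, rfl⟩
    refine ⟨⟨c, rfl⟩, ?_⟩
    rwa [hmem, hrepr, hP.forall_ratDeg_le_iff hd]

variable [Algebra k L] [IsScalarTower k k[X] L]

theorem mem_and_mem_iff_mem_span (hA : ∀ z, z ∈ Ainf ↔ ratDeg z ≤ 0)
    (hn : finrank (RatFunc k) L = n) (h : IsReducedBasisPair k L Ainf B Binf n I Iinf b v P d)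
    (r : ℤ) (z : L) :
    (z ∈ I ∧ z ∈ FractionalIdeal.spanSingleton Binf⁰
        (algebraMap (RatFunc k) L RatFunc.X ^ r) * Iinf) ↔
      z ∈ Submodule.span k (Set.range fun p : {ij : Fin n × ℕ // (ij.2 : ℤ) ≤ d ij.1 + r} =>
        b p.1.1 * algebraMap (RatFunc k) L RatFunc.X ^ p.1.2) := by
  simp only [mul_algebraMap_X_pow_eq_smul]
  rw [mem_span_X_pow_smul_iff b (fun i => d i + r), h.mem_and_mem_iff_exists_sum hA hn r z]
  simp only [ratDeg_algebraMap_le_iff]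

theorem exists_perm_comp_eq {b' v' : Fin n → L} {P' : Matrix (Fin n) (Fin n) (RatFunc k)}
    {d' : Fin n → ℤ} (hA : ∀ z, z ∈ Ainf ↔ ratDeg z ≤ 0) (hn : finrank (RatFunc k) L = n)
    (h : IsReducedBasisPair k L Ainf B Binf n I Iinf b v P d)
    (h' : IsReducedBasisPair k L Ainf B Binf n I Iinf b' v' P' d') :
    ∃ σ : Equiv.Perm (Fin n), ∀ i, d' i = d (σ i) := by
  refine exists_perm_of_sum_toNat_eq fun r => ?_
  have hspan := Submodule.ext fun z => (h.mem_and_mem_iff_mem_span hA hn (r - 1) z).symm.trans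
    (h'.mem_and_mem_iff_mem_span hA hn (r - 1) z)
  have hdim := (h.1.finrank_span_mul_algebraMap_X_pow fun i => d i + (r - 1)).symm.trans
    ((congrArg (fun W : Submodule k L => finrank k W) hspan).trans
      (h'.1.finrank_span_mul_algebraMap_X_pow fun i => d' i + (r - 1)))
  simpa only [add_assoc, sub_add_cancel] using hdim

end IsReducedBasisPair

theorem stmt_13_general
    {k : Type*} [Field k]
    {L : Type*} [Field L] [Algebra (RatFunc k) L]
    (f : Polynomial (Polynomial k)) (n : ℕ)
    (hfn : f.natDegree = n)
    (hfmonic : f.Monic)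
    (hfirr : Irreducible (f.map (algebraMap (Polynomial k) (RatFunc k))))
    (x : L)
    (hx : Polynomial.aeval x (f.map (algebraMap (Polynomial k) (RatFunc k))) = 0)
    (hxgen : Algebra.adjoin (RatFunc k) ({x} : Set L) = ⊤)
    (B : Type*) [CommRing B] [IsDomain B] [IsDedekindDomain B]
    [Algebra B L] [IsFractionRing B L]
    (Ainf : Subring (RatFunc k)) (hAinf : (Ainf : Set (RatFunc k)) = infinitePlaceRing k)
    (Binf : Type*) [CommRing Binf] [IsDomain Binf] [IsDedekindDomain Binf]
    [Algebra Binf L] [IsFractionRing Binf L]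
    [Algebra (Polynomial k) L] [IsScalarTower (Polynomial k) (RatFunc k) L]
    [Algebra Ainf L]
    (hAinfL : algebraMap Ainf L = (algebraMap (RatFunc k) L).comp Ainf.subtype)
    [Algebra k L] [IsScalarTower k (RatFunc k) L]
    (I : FractionalIdeal (nonZeroDivisors B) L)
    (Iinf : FractionalIdeal (nonZeroDivisors Binf) L)
    (b v : Fin n → L) (P : Matrix (Fin n) (Fin n) (RatFunc k)) (d : Fin n → ℤ)
    (hdata : IsReducedBasisPair k L Ainf B Binf n I Iinf b v P d) :
    (LinearIndependent (RatFunc k) b ∧ Submodule.span (RatFunc k) (Set.range b) = ⊤) ∧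
    (LinearIndependent (RatFunc k) v ∧ Submodule.span (RatFunc k) (Set.range v) = ⊤) ∧
    (∀ r : ℤ,
      LinearIndependent k (fun p : {ij : Fin n × ℕ // (ij.2 : ℤ) ≤ d ij.1 + r} =>
        b p.1.1 * algebraMap (RatFunc k) L (RatFunc.X : RatFunc k) ^ (p.1.2 : ℕ)) ∧
      ∀ z : L,
        (z ∈ I ∧ z ∈ FractionalIdeal.spanSingleton (nonZeroDivisors Binf)
            (algebraMap (RatFunc k) L (RatFunc.X : RatFunc k) ^ r) * Iinf) ↔
        z ∈ Submodule.span k (Set.range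
          (fun p : {ij : Fin n × ℕ // (ij.2 : ℤ) ≤ d ij.1 + r} =>
            b p.1.1 * algebraMap (RatFunc k) L (RatFunc.X : RatFunc k) ^ (p.1.2 : ℕ)))) ∧
    (∀ (b' v' : Fin n → L) (P' : Matrix (Fin n) (Fin n) (RatFunc k)) (d' : Fin n → ℤ),
      IsReducedBasisPair k L Ainf B Binf n I Iinf b' v' P' d' →
      ∃ σ : Equiv.Perm (Fin n), ∀ i, d' i = d (σ i)) := by
  have hA (z : RatFunc k) : z ∈ Ainf ↔ ratDeg z ≤ 0 := by
    rw [← SetLike.mem_coe, hAinf, mem_infinitePlaceRing_iff]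
  obtain ⟨_, hrank⟩ := finrank_eq_natDegree_of_adjoin_eq_top hfirr (hfmonic.map _) hx hxgen
  rw [hfmonic.natDegree_map, hfn] at hrank
  have : IsScalarTower Ainf (RatFunc k) L := .of_algebraMap_eq' hAinfL
  have : IsScalarTower k k[X] L := .to₁₂₄ k k[X] (RatFunc k) L
  exact ⟨⟨hdata.linearIndependent_left, hdata.span_left_eq_top hrank⟩,
    ⟨hdata.linearIndependent_right hA, hdata.span_right_eq_top hA hrank⟩,
    fun r => ⟨hdata.1.mul_algebraMap_X_pow fun i => d i + r,
      hdata.mem_and_mem_iff_mem_span hA hrank r⟩,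
    fun _ _ _ _ hdata' => hdata.exists_perm_comp_eq hA hrank hdata'⟩

/-- Hess's key proposition: bases of `I` and `I∞` are `K`-bases of `L`; a row reduced
transition matrix yields `k`-bases of all spaces `𝓛(D + r·D_∞) = I ∩ t^r·I∞`; and the
row degrees are unique up to permutation. -/
theorem stmt_13
    {k : Type*} [Field k] [PerfectField k]
    {L : Type*} [Field L] [Algebra (RatFunc k) L]
    (f : Polynomial (Polynomial k)) (n : ℕ)
    (hfn : f.natDegree = n) (hn : 0 < n)
    (hfmonic : f.Monic)
    (hfirr : Irreducible (f.map (algebraMap (Polynomial k) (RatFunc k))))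
    (hfsep : (f.map (algebraMap (Polynomial k) (RatFunc k))).Separable)
    (x : L)
    (hx : Polynomial.aeval x (f.map (algebraMap (Polynomial k) (RatFunc k))) = 0)
    (hxgen : Algebra.adjoin (RatFunc k) ({x} : Set L) = ⊤)
    (B : Type*) [CommRing B] [IsDomain B] [IsDedekindDomain B]
    [Algebra B L] [IsFractionRing B L]
    (hB : ∀ z : L, (∃ b : B, algebraMap B L b = z) ↔
      ((algebraMap (RatFunc k) L).comp (algebraMap (Polynomial k) (RatFunc k))).IsIntegralElem z)
    (Ainf : Subring (RatFunc k)) (hAinf : (Ainf : Set (RatFunc k)) = infinitePlaceRing k)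
    (Binf : Type*) [CommRing Binf] [IsDomain Binf] [IsDedekindDomain Binf]
    [Algebra Binf L] [IsFractionRing Binf L]
    (hBinf : ∀ z : L, (∃ b : Binf, algebraMap Binf L b = z) ↔
      ((algebraMap (RatFunc k) L).comp Ainf.subtype).IsIntegralElem z)
    [Algebra (Polynomial k) L] [IsScalarTower (Polynomial k) (RatFunc k) L]
    [Algebra Ainf L]
    (hAinfL : algebraMap Ainf L = (algebraMap (RatFunc k) L).comp Ainf.subtype)
    [Algebra k L] [IsScalarTower k (RatFunc k) L]
    (I : FractionalIdeal (nonZeroDivisors B) L) (hI : I ≠ 0)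
    (Iinf : FractionalIdeal (nonZeroDivisors Binf) L) (hIinf : Iinf ≠ 0)
    (b v : Fin n → L) (P : Matrix (Fin n) (Fin n) (RatFunc k)) (d : Fin n → ℤ)
    (hdata : IsReducedBasisPair k L Ainf B Binf n I Iinf b v P d) :
    (LinearIndependent (RatFunc k) b ∧ Submodule.span (RatFunc k) (Set.range b) = ⊤) ∧
    (LinearIndependent (RatFunc k) v ∧ Submodule.span (RatFunc k) (Set.range v) = ⊤) ∧
    (∀ r : ℤ,
      LinearIndependent k (fun p : {ij : Fin n × ℕ // (ij.2 : ℤ) ≤ d ij.1 + r} =>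
        b p.1.1 * algebraMap (RatFunc k) L (RatFunc.X : RatFunc k) ^ (p.1.2 : ℕ)) ∧
      ∀ z : L,
        (z ∈ I ∧ z ∈ FractionalIdeal.spanSingleton (nonZeroDivisors Binf)
            (algebraMap (RatFunc k) L (RatFunc.X : RatFunc k) ^ r) * Iinf) ↔
        z ∈ Submodule.span k (Set.range
          (fun p : {ij : Fin n × ℕ // (ij.2 : ℤ) ≤ d ij.1 + r} =>
            b p.1.1 * algebraMap (RatFunc k) L (RatFunc.X : RatFunc k) ^ (p.1.2 : ℕ)))) ∧
    (∀ (b' v' : Fin n → L) (P' : Matrix (Fin n) (Fin n) (RatFunc k)) (d' : Fin n → ℤ),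
      IsReducedBasisPair k L Ainf B Binf n I Iinf b' v' P' d' →
      ∃ σ : Equiv.Perm (Fin n), ∀ i, d' i = d (σ i)) :=
  stmt_13_general f n hfn hfmonic hfirr x hx hxgen B Ainf hAinf Binf hAinfL I Iinf b v P d hdata
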